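/- With A uniformly elliptic and Lipschitz, g = A^{-1}, σ(x,t)² = Σ g_{ij}(0,t)x_i x_j, one has ⟨A(x,t)∇σ, ∇σ⟩ = 1 + O(σ): there exists C > 0 such that |⟨A(x,t)∇_xσ(x,t), ∇_xσ(x,t)⟩ - 1| ≤ Cσ(x,t) for all small |x| ≠ 0. -/

import Mathlib

open scoped Matrix

/-! Put `M = A(0,t)` and `y = M⁻¹x`. Then `σ² = ⟨My, y⟩` and `∇σ = y / σ`, so
`⟨A(x,t)∇σ, ∇σ⟩ - 1 = ⟨(A(x,t) - M)y, y⟩ / ⟨My, y⟩`. The entries of `A(x,t) - M` are at most `K|x|`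
by the Lipschitz bound, so the numerator is at most `nK|x||y|² ≤ nKΛ|x|⟨My, y⟩`. Finally
Cauchy–Schwarz for the form of `M` gives `|x|⁴ = ⟨My, x⟩² ≤ ⟨Mx, x⟩⟨My, y⟩ ≤ Λ|x|²σ²`, whence
`|x| ≤ Λσ`. -/

namespace Matrix

variable {ι : Type*} [Fintype ι]

theorem dotProduct_mulVec_eq_sum_sum (M : Matrix ι ι ℝ) (u v : ι → ℝ) :
    u ⬝ᵥ M *ᵥ v = ∑ i, ∑ j, M i j * u i * v j := by
  simp only [dotProduct, mulVec, Finset.mul_sum]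
  exact Finset.sum_congr rfl fun i _ => Finset.sum_congr rfl fun j _ => by ring

theorem posDef_of_sum_sq_le {M : Matrix ι ι ℝ} {c : ℝ} (hc : 0 < c) (hM : M.IsSymm)
    (hlow : ∀ v, c * ∑ i, v i ^ 2 ≤ v ⬝ᵥ M *ᵥ v) : M.PosDef := by
  refine posDef_iff_dotProduct_mulVec.mpr ⟨hM, fun v hv => ?_⟩
  have hv2 : 0 < ∑ i, v i ^ 2 := by
    simpa only [dotProduct, ← sq, star_trivial] using dotProduct_self_star_pos_iff.mpr hv
  simpa only [star_trivial] using (mul_pos hc hv2).trans_le (hlow v)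

theorem sum_sq_mulVec_le [DecidableEq ι] {M : Matrix ι ι ℝ} {Λ : ℝ} (hΛ : 0 ≤ Λ) (hM : M.IsSymm)
    (hpos : ∀ v, 0 ≤ v ⬝ᵥ M *ᵥ v) (hupp : ∀ v, v ⬝ᵥ M *ᵥ v ≤ Λ * ∑ i, v i ^ 2) (y : ι → ℝ) :
    ∑ i, (M *ᵥ y) i ^ 2 ≤ Λ * (y ⬝ᵥ M *ᵥ y) := by
  set x := M *ᵥ y
  have hs : ∑ i, x i ^ 2 = x ⬝ᵥ M *ᵥ y := by simp only [dotProduct, x, sq]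
  have hcs : (x ⬝ᵥ M *ᵥ y) ^ 2 ≤ (x ⬝ᵥ M *ᵥ x) * (y ⬝ᵥ M *ᵥ y) := by
    simpa only [toBilin'_apply'] using
      (toBilin' M).apply_sq_le_of_symm (by simpa only [toBilin'_apply'] using hpos)
        (LinearMap.BilinForm.isSymm_iff.mp (isSymm_toBilin'_iff_isSymm.mpr hM)) x y
  rw [← hs] at hcs
  rcases (Finset.sum_nonneg fun i _ => sq_nonneg (x i)).eq_or_lt with h0 | hpos'
  · rw [← h0]; exact mul_nonneg hΛ (hpos y)
  · refine le_of_mul_le_mul_left ?_ hpos'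
    calc (∑ i, x i ^ 2) * ∑ i, x i ^ 2 = (∑ i, x i ^ 2) ^ 2 := (sq _).symm
      _ ≤ (Λ * ∑ i, x i ^ 2) * (y ⬝ᵥ M *ᵥ y) := hcs.trans (by gcongr; exacts [hpos y, hupp x])
      _ = (∑ i, x i ^ 2) * (Λ * (y ⬝ᵥ M *ᵥ y)) := by ring

theorem abs_dotProduct_mulVec_self_le {B : Matrix ι ι ℝ} {ε : ℝ} (hε : 0 ≤ ε)
    (hB : ∀ i j, |B i j| ≤ ε) (v : ι → ℝ) :
    |v ⬝ᵥ B *ᵥ v| ≤ ε * Fintype.card ι * ∑ i, v i ^ 2 := by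
  rw [dotProduct_mulVec_eq_sum_sum]
  calc |∑ i, ∑ j, B i j * v i * v j|
      ≤ ∑ i, ∑ j, |B i j * v i * v j| :=
        (Finset.abs_sum_le_sum_abs _ _).trans
          (Finset.sum_le_sum fun i _ => Finset.abs_sum_le_sum_abs _ _)
    _ ≤ ∑ i, ∑ j, ε * |v i| * |v j| := by
        gcongr with i _ j _
        rw [abs_mul, abs_mul]
        gcongr
        exact hB i j
    _ = ε * (∑ i, |v i|) ^ 2 := by
        rw [sq, Finset.sum_mul_sum, Finset.mul_sum]
        exact Finset.sum_congr rfl fun i _ => by rw [Finset.mul_sum]; simp only [mul_assoc]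
    _ ≤ ε * (Fintype.card ι * ∑ i, |v i| ^ 2) := by gcongr; exact sq_sum_le_card_mul_sum_sq
    _ = ε * Fintype.card ι * ∑ i, v i ^ 2 := by simp only [sq_abs, mul_assoc]

theorem abs_div_dotProduct_mulVec_sub_one_le {M N : Matrix ι ι ℝ} {Λ ε : ℝ} (hΛ : 0 < Λ)
    (hε : 0 ≤ ε) (hlow : ∀ v, Λ⁻¹ * ∑ i, v i ^ 2 ≤ v ⬝ᵥ M *ᵥ v)
    (hNM : ∀ i j, |N i j - M i j| ≤ ε) {y : ι → ℝ} (hy : y ≠ 0) :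
    |(y ⬝ᵥ N *ᵥ y) / (y ⬝ᵥ M *ᵥ y) - 1| ≤ ε * Fintype.card ι * Λ := by
  have hy2 : 0 < ∑ i, y i ^ 2 := by
    simpa only [dotProduct, ← sq, star_trivial] using dotProduct_self_star_pos_iff.mpr hy
  have hy2q : ∑ i, y i ^ 2 ≤ Λ * (y ⬝ᵥ M *ᵥ y) := by
    have := hlow y
    rwa [inv_mul_le_iff₀ hΛ] at this
  have hq : 0 < y ⬝ᵥ M *ᵥ y := (mul_pos (inv_pos.mpr hΛ) hy2).trans_le (hlow y)
  have hdiff : y ⬝ᵥ N *ᵥ y - y ⬝ᵥ M *ᵥ y = y ⬝ᵥ (N - M) *ᵥ y := by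
    rw [sub_mulVec, dotProduct_sub]
  rw [div_sub_one hq.ne', abs_div, abs_of_pos hq, div_le_iff₀ hq, hdiff]
  calc |y ⬝ᵥ (N - M) *ᵥ y| ≤ ε * Fintype.card ι * ∑ i, y i ^ 2 :=
        abs_dotProduct_mulVec_self_le hε (fun i j => hNM i j) y
    _ ≤ ε * Fintype.card ι * (Λ * (y ⬝ᵥ M *ᵥ y)) := by gcongr
    _ = ε * Fintype.card ι * Λ * (y ⬝ᵥ M *ᵥ y) := by ring

end Matrix

open Matrix

/-- With A uniformly elliptic, symmetric, Lipschitz, g = A⁻¹,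
σ(x,t)² = Σ g_{ij}(0,t)x_i x_j, ∂_kσ = (Σ_m g_{km}(0,t)x_m)/σ and
⟨A∇σ,∇σ⟩ = Σ_{i,j} a_{ij} ∂_iσ ∂_jσ, one has ⟨A∇σ,∇σ⟩ = 1 + O(σ). -/
theorem stmt7 (n : ℕ) (Λ K : ℝ) (hΛ : 1 < Λ) (hK : 0 < K)
    (A : EuclideanSpace ℝ (Fin n) → ℝ → Matrix (Fin n) (Fin n) ℝ)
    (hsymm : ∀ x t, (A x t).IsSymm)
    (hell : ∀ x t (v : Fin n → ℝ),
      Λ⁻¹ * (∑ i, v i ^ 2) ≤ v ⬝ᵥ (A x t).mulVec v ∧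
      v ⬝ᵥ (A x t).mulVec v ≤ Λ * (∑ i, v i ^ 2))
    (hlip : ∀ x y t s (i j : Fin n),
      |A x t i j - A y s i j| ≤ K * (‖x - y‖ + |t - s|))
    (σ : EuclideanSpace ℝ (Fin n) → ℝ → ℝ)
    (hσ : ∀ x t, σ x t = Real.sqrt (∑ i, ∑ j, (A 0 t)⁻¹ i j * x i * x j))
    (Dσ : Fin n → EuclideanSpace ℝ (Fin n) → ℝ → ℝ)
    (hDσ : ∀ k x t, Dσ k x t = (∑ m, (A 0 t)⁻¹ k m * x m) / σ x t)
 :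
    ∃ C > (0 : ℝ), ∃ r > (0 : ℝ),
      ∀ (x : EuclideanSpace ℝ (Fin n)) (t : ℝ), x ≠ 0 → ‖x‖ ≤ r →
        |(∑ i, ∑ j, A x t i j * Dσ i x t * Dσ j x t) - 1| ≤ C * σ x t := by
  have hΛ0 : 0 < Λ := one_pos.trans hΛ
  refine ⟨K * n * Λ ^ 2 + 1, by positivity, 1, one_pos, fun x t hx _ => ?_⟩
  have hpd : (A 0 t).PosDef :=
    posDef_of_sum_sq_le (inv_pos.mpr hΛ0) (hsymm 0 t) fun v => (hell 0 t v).1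
  set y := (A 0 t)⁻¹ *ᵥ x.ofLp with hy_def
  have hAy : A 0 t *ᵥ y = x.ofLp := by
    rw [mulVec_mulVec, mul_nonsing_inv _ ((isUnit_iff_isUnit_det _).mp hpd.isUnit), one_mulVec]
  have hy : y ≠ 0 := fun h => hx (by ext i; simpa [h] using (congrFun hAy i).symm)
  have hq : 0 < y ⬝ᵥ A 0 t *ᵥ y := by simpa using hpd.dotProduct_mulVec_pos hy
  have hσ' : σ x t = √(y ⬝ᵥ A 0 t *ᵥ y) := by
    rw [hσ, ← dotProduct_mulVec_eq_sum_sum, ← hy_def, ← hAy, dotProduct_comm]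
  have hσpos : 0 < σ x t := hσ' ▸ Real.sqrt_pos.mpr hq
  have hσsq : σ x t ^ 2 = y ⬝ᵥ A 0 t *ᵥ y := hσ' ▸ Real.sq_sqrt hq.le
  have hsum : ∑ i, ∑ j, A x t i j * Dσ i x t * Dσ j x t
      = (y ⬝ᵥ A x t *ᵥ y) / (y ⬝ᵥ A 0 t *ᵥ y) := by
    have hD : ∀ k, Dσ k x t = y k / σ x t := fun k => hDσ k x t
    simp only [hD, ← hσsq, dotProduct_mulVec_eq_sum_sum, Finset.sum_div]
    exact Finset.sum_congr rfl fun i _ => Finset.sum_congr rfl fun j _ => by ring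
  have hxσ : ‖x‖ ≤ Λ * σ x t := by
    have hx2 : ‖x‖ ^ 2 ≤ Λ * σ x t ^ 2 := by
      have h := sum_sq_mulVec_le hΛ0.le (hsymm 0 t) hpd.posSemidef.dotProduct_mulVec_nonneg
        (fun v => (hell 0 t v).2) y
      rwa [← hσsq, hAy, ← EuclideanSpace.real_norm_sq_eq] at h
    refine (pow_le_pow_iff_left₀ (norm_nonneg x) (by positivity) two_ne_zero).mp ?_
    nlinarith
  have hratio := abs_div_dotProduct_mulVec_sub_one_le hΛ0 (by positivity : 0 ≤ K * ‖x‖)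
    (fun v => (hell 0 t v).1) (fun i j => by simpa using hlip x 0 t t i j) hy
  rw [hsum]
  calc _ ≤ K * ‖x‖ * n * Λ := by simpa using hratio
    _ ≤ K * (Λ * σ x t) * n * Λ := by gcongr
    _ ≤ (K * n * Λ ^ 2 + 1) * σ x t := by nlinarith
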